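/- arXiv:2410.08785 — 3 statements merged into one kernel-verified Lean document; each statement's English description precedes it below -/
import Mathlib

section
/- Let n ≥ 3 and let s, t ∈ {-1,1}^n with s ≠ t and ♯_n(s) = ♯_n(t). Assume s begins with (1,-1), t begins with (-1,1), and Σ_{k=1}^n s_k ♯_k(s) > Σ_{k=1}^n t_k ♯_k(t). Then the algebraic curve c_{s,t} = {(x,y) ∈ ℝ² : Σ_{k=1}^n (s_k x^{♯_k(s)} y^{♯̃_k(s)} - t_k x^{♯_k(t)} y^{♯̃_k(t)}) = 0} intersects the open region R = {(x,y) ∈ (0,1)² : x + y > 1}. -/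
/-!
Put `f x = g x 1`, where `g` is the polynomial defining the curve. Then `f 0 = 1` (only the
`k = 0` term of `t` survives), `f 1 = 0` (both sequences have the same number of `1`s), and
`f' 1 > 0` is exactly the slope hypothesis. Hence `f` is positive at some `a` near `0` and
negative at some `b` near `1`; by continuity both signs persist for `g (·, y)` with `y < 1`
close to `1`, and the intermediate value theorem gives a zero `(x, y)` with `a < x < b` and
`y > 1 - a`, so `x + y > 1`.
-/

open Classical

/-- number of entries equal to 1 among the first `k` entries of `r` -/
noncomputable def sharp (r : ℕ → ℝ) (k : ℕ) : ℕ :=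
  ((Finset.range k).filter (fun i => r i = 1)).card

open Filter Set Topology

lemma eventually_neg_nhdsLT_of_hasDerivAt_pos {f : ℝ → ℝ} {f' x₀ : ℝ}
    (hf : HasDerivAt f f' x₀) (hf' : 0 < f') (hx₀ : f x₀ = 0) :
    ∀ᶠ x in 𝓝[<] x₀, f x < 0 := by
  have hslope : ∀ᶠ x in 𝓝[<] x₀, 0 < slope f x₀ x :=
    ((hasDerivAt_iff_tendsto_slope.mp hf).eventually (eventually_gt_nhds hf')).filter_mono
      (nhdsLT_le_nhdsNE x₀)
  filter_upwards [hslope, self_mem_nhdsWithin] with x hx hlt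
  exact neg_of_slope_pos hlt hx hx₀

lemma exists_zero_nhdsLT_of_sign_change {g : ℝ → ℝ → ℝ} (hg : Continuous (Function.uncurry g))
    {a b y₀ c : ℝ} (hab : a ≤ b) (ha : 0 < g a y₀) (hb : g b y₀ < 0) (hc : c < y₀) :
    ∃ x ∈ Ioo a b, ∃ y ∈ Ioo c y₀, g x y = 0 := by
  have hcont (x : ℝ) : Continuous (g x) := hg.comp (Continuous.prodMk_right x)
  have hpos : ∀ᶠ y in 𝓝[<] y₀, 0 < g a y :=
    ((hcont a).continuousAt.eventually (eventually_gt_nhds ha)).filter_mono nhdsWithin_le_nhds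
  have hneg : ∀ᶠ y in 𝓝[<] y₀, g b y < 0 :=
    ((hcont b).continuousAt.eventually (eventually_lt_nhds hb)).filter_mono nhdsWithin_le_nhds
  obtain ⟨y, ⟨hay, hby⟩, hy⟩ := ((hpos.and hneg).and (Ioo_mem_nhdsLT hc)).exists
  obtain ⟨x, hx, hxy⟩ := intermediate_value_Ioo' hab
    (hg.comp (continuous_id.prodMk continuous_const)).continuousOn ⟨hby, hay⟩
  exact ⟨x, hx, y, hy, hxy⟩

lemma sum_eq_two_mul_sharp_sub {n : ℕ} {r : ℕ → ℝ} (hr : ∀ k < n, r k = 1 ∨ r k = -1) :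
    ∑ k ∈ Finset.range n, r k = 2 * (sharp r n : ℝ) - n := by
  have h : ∀ k ∈ Finset.range n, r k = 2 * (if r k = 1 then (1 : ℝ) else 0) - 1 := by
    intro k hk
    rcases hr k (Finset.mem_range.mp hk) with h | h <;> norm_num [h]
  rw [Finset.sum_congr rfl h, Finset.sum_sub_distrib, Finset.sum_const, ← Finset.mul_sum,
    Finset.sum_boole]
  simp [sharp]

lemma sharp_pos_of_eq_one {r : ℕ → ℝ} {i k : ℕ} (hi : r i = 1) (hik : i < k) :
    0 < sharp r k :=
  Finset.card_pos.mpr ⟨i, by simp [hi, hik]⟩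

lemma sharp_one_eq_zero_of_ne_one {r : ℕ → ℝ} (h : r 0 ≠ 1) : sharp r 1 = 0 := by
  simp [sharp, Finset.range_one, Finset.filter_singleton, h]

section WalkPoly

/-- The curve `c_{s,t}` is the zero set of `walkPoly n s - walkPoly n t`. -/
noncomputable def walkPoly (n : ℕ) (r : ℕ → ℝ) (x y : ℝ) : ℝ :=
  ∑ k ∈ Finset.range n, r k * x ^ sharp r (k + 1) * y ^ (k + 1 - sharp r (k + 1))

variable {n : ℕ} {r : ℕ → ℝ}

lemma continuous_walkPoly : Continuous (Function.uncurry (walkPoly n r)) := by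
  unfold walkPoly Function.uncurry
  fun_prop

lemma walkPoly_one_one (hr : ∀ k < n, r k = 1 ∨ r k = -1) :
    walkPoly n r 1 1 = 2 * (sharp r n : ℝ) - n := by
  simp only [walkPoly, one_pow, mul_one]
  exact sum_eq_two_mul_sharp_sub hr

lemma walkPoly_zero_one_of_first_eq_one (h0 : r 0 = 1) : walkPoly n r 0 1 = 0 := by
  refine Finset.sum_eq_zero fun k _ => ?_
  rw [zero_pow (sharp_pos_of_eq_one h0 k.succ_pos).ne', mul_zero, zero_mul]

lemma walkPoly_zero_one_of_first_eq_neg_one (hn : 0 < n) (h0 : r 0 = -1) (h1 : r 1 = 1) :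
    walkPoly n r 0 1 = -1 := by
  rw [walkPoly, Finset.sum_eq_single_of_mem 0 (Finset.mem_range.mpr hn)]
  · simp [sharp_one_eq_zero_of_ne_one (by rw [h0]; norm_num : r 0 ≠ 1), h0]
  · intro k _ hk
    rw [zero_pow (sharp_pos_of_eq_one h1 (by omega)).ne', mul_zero, zero_mul]

lemma hasDerivAt_walkPoly_one :
    HasDerivAt (fun x => walkPoly n r x 1)
      (∑ k ∈ Finset.range n, r k * (sharp r (k + 1) : ℝ)) 1 := by
  have h := HasDerivAt.fun_sum (u := Finset.range n) fun k _ =>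
    (hasDerivAt_pow (sharp r (k + 1)) (1 : ℝ)).const_mul (r k)
  simpa [walkPoly] using h

end WalkPoly

theorem curve_meets_region_general (n : ℕ) (hn : 3 ≤ n) (s t : ℕ → ℝ)
    (hs : ∀ k < n, s k = 1 ∨ s k = -1) (ht : ∀ k < n, t k = 1 ∨ t k = -1)
    (hsharp : sharp s n = sharp t n)
    (hs0 : s 0 = 1) (ht0 : t 0 = -1) (ht1 : t 1 = 1)
    (hslope : ∑ k ∈ Finset.range n, t k * (sharp t (k + 1) : ℝ) <
      ∑ k ∈ Finset.range n, s k * (sharp s (k + 1) : ℝ)) :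
    ∃ x y : ℝ, x ∈ Set.Ioo (0:ℝ) 1 ∧ y ∈ Set.Ioo (0:ℝ) 1 ∧ 1 < x + y ∧
      ∑ k ∈ Finset.range n,
        (s k * x ^ (sharp s (k + 1)) * y ^ ((k + 1) - sharp s (k + 1)) -
          t k * x ^ (sharp t (k + 1)) * y ^ ((k + 1) - sharp t (k + 1))) = 0 := by
  set g : ℝ → ℝ → ℝ := fun x y => walkPoly n s x y - walkPoly n t x y
  have hg : Continuous (Function.uncurry g) := continuous_walkPoly.sub continuous_walkPoly
  have hg0 : g 0 1 = 1 := by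
    simp [g, walkPoly_zero_one_of_first_eq_one hs0,
      walkPoly_zero_one_of_first_eq_neg_one (by omega : 0 < n) ht0 ht1]
  have hg1 : g 1 1 = 0 := by simp [g, walkPoly_one_one hs, walkPoly_one_one ht, hsharp]
  have hderiv : HasDerivAt (fun x => g x 1) (∑ k ∈ Finset.range n, s k * (sharp s (k + 1) : ℝ) -
      ∑ k ∈ Finset.range n, t k * (sharp t (k + 1) : ℝ)) 1 :=
    hasDerivAt_walkPoly_one.sub hasDerivAt_walkPoly_one
  obtain ⟨b, hb, hb01⟩ := ((eventually_neg_nhdsLT_of_hasDerivAt_pos hderiv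
    (sub_pos.mpr hslope) hg1).and (Ioo_mem_nhdsLT one_pos)).exists
  have hpos : ∀ᶠ x in 𝓝[>] 0, 0 < g x 1 :=
    ((hg.comp (continuous_id.prodMk continuous_const)).continuousAt.eventually
      (eventually_gt_nhds (show (0 : ℝ) < g 0 1 by linarith))).filter_mono nhdsWithin_le_nhds
  obtain ⟨a, ha, ha0b⟩ := (hpos.and (Ioo_mem_nhdsGT hb01.1)).exists
  obtain ⟨x, hx, y, hy, hxy⟩ :=
    exists_zero_nhdsLT_of_sign_change hg ha0b.2.le ha hb (by linarith [ha0b.1] : 1 - a < 1)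
  refine ⟨x, y, ⟨by linarith [ha0b.1, hx.1], by linarith [hb01.2, hx.2]⟩,
    ⟨by linarith [ha0b.2, hb01.2, hy.1], hy.2⟩, by linarith [hx.1, hy.1], ?_⟩
  rw [Finset.sum_sub_distrib]
  exact hxy

theorem curve_meets_region (n : ℕ) (hn : 3 ≤ n) (s t : ℕ → ℝ)
    (hs : ∀ k < n, s k = 1 ∨ s k = -1) (ht : ∀ k < n, t k = 1 ∨ t k = -1)
    (hne : ∃ k < n, s k ≠ t k) (hsharp : sharp s n = sharp t n)
    (hs0 : s 0 = 1) (hs1 : s 1 = -1) (ht0 : t 0 = -1) (ht1 : t 1 = 1)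
    (hslope : ∑ k ∈ Finset.range n, t k * (sharp t (k + 1) : ℝ) <
      ∑ k ∈ Finset.range n, s k * (sharp s (k + 1) : ℝ)) :
    ∃ x y : ℝ, x ∈ Set.Ioo (0:ℝ) 1 ∧ y ∈ Set.Ioo (0:ℝ) 1 ∧ 1 < x + y ∧
      ∑ k ∈ Finset.range n,
        (s k * x ^ (sharp s (k + 1)) * y ^ ((k + 1) - sharp s (k + 1)) -
          t k * x ^ (sharp t (k + 1)) * y ^ ((k + 1) - sharp t (k + 1))) = 0 :=
  curve_meets_region_general n hn s t hs ht hsharp hs0 ht0 ht1 hslope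
end

section
/- The polynomial g(x,y) = 2x²y³ + x²y² - x²y - xy³ - xy² - 2xy + x + y has a zero (β₁, β₂) in the open region R = {(x,y) ∈ (0,1)² : x + y > 1}. -/
theorem example_curve_n5_meets_region :
    ∃ x y : ℝ, x ∈ Set.Ioo (0:ℝ) 1 ∧ y ∈ Set.Ioo (0:ℝ) 1 ∧ 1 < x + y ∧
      2 * x ^ 2 * y ^ 3 + x ^ 2 * y ^ 2 - x ^ 2 * y - x * y ^ 3 - x * y ^ 2 -
        2 * x * y + x + y = 0 := by
  refine ⟨100/171, 9/10, ⟨by norm_num, by norm_num⟩, ⟨by norm_num, by norm_num⟩, by norm_num, by norm_num⟩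
end

section
/- The polynomial g(x,y) = 2x⁴y² - x⁴y + x³y² - x³y + x²y² - x²y - xy² - 2xy + x + y has a zero (β₁, β₂) in the open region R = {(x,y) ∈ (0,1)² : x + y > 1}. -/
theorem example_curve_n6_meets_region :
    ∃ x y : ℝ, x ∈ Set.Ioo (0:ℝ) 1 ∧ y ∈ Set.Ioo (0:ℝ) 1 ∧ 1 < x + y ∧
      2 * x ^ 4 * y ^ 2 - x ^ 4 * y + x ^ 3 * y ^ 2 - x ^ 3 * y + x ^ 2 * y ^ 2 -
        x ^ 2 * y - x * y ^ 2 - 2 * x * y + x + y = 0 := by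
  have hcont : ContinuousOn (fun x : ℝ => x ^ 4 + x ^ 3 + x ^ 2 - 1)
      (Set.Icc (0.6 : ℝ) 0.9) := by fun_prop
  have h1 : ((fun x : ℝ => x ^ 4 + x ^ 3 + x ^ 2 - 1) 0.6) < 0 := by norm_num
  have h2 : (0:ℝ) < ((fun x : ℝ => x ^ 4 + x ^ 3 + x ^ 2 - 1) 0.9) := by norm_num
  have hsub : Set.Ioo ((fun x : ℝ => x ^ 4 + x ^ 3 + x ^ 2 - 1) 0.6)
      ((fun x : ℝ => x ^ 4 + x ^ 3 + x ^ 2 - 1) 0.9) ⊆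
      (fun x : ℝ => x ^ 4 + x ^ 3 + x ^ 2 - 1) '' Set.Ioo 0.6 0.9 :=
    intermediate_value_Ioo (by norm_num) hcont
  have h0 : (0:ℝ) ∈ Set.Ioo ((fun x : ℝ => x ^ 4 + x ^ 3 + x ^ 2 - 1) 0.6)
      ((fun x : ℝ => x ^ 4 + x ^ 3 + x ^ 2 - 1) 0.9) := ⟨h1, h2⟩
  obtain ⟨c, hc, hc0⟩ := hsub h0
  refine ⟨c, c, ⟨by linarith [hc.1], by linarith [hc.2]⟩,
    ⟨by linarith [hc.1], by linarith [hc.2]⟩, by linarith [hc.1], ?_⟩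
  have hc0' : c ^ 4 + c ^ 3 + c ^ 2 - 1 = 0 := hc0
  linear_combination (2 * c * (c - 1)) * hc0'
end
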